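/- arXiv:0902.2497 — 2 statements merged into one kernel-verified Lean document; each statement's English description precedes it below -/
import Mathlib

section
/- Let e ≥ 2, v ∈ ℤ/eℤ, and let λ be an e-core partition (residue of node (i,j) is j - i + v mod e). Fix x ∈ ℤ/eℤ and let μ be the partition obtained from λ by removing all removable x-nodes of λ. Then μ is again an e-core. -/
open Finset

/-- An `r`-multipartition: a tuple of finitely supported weakly decreasing
sequences of naturals (rows are 0-based). -/
structure MultiPartition (r : ℕ) where
  part : Fin r → ℕ →₀ ℕ
  mono : ∀ s i, part s (i + 1) ≤ part s i

namespace MultiPartition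

variable {r e : ℕ}

/-- total number of nodes -/
def size (l : MultiPartition r) : ℕ := ∑ s, (l.part s).sum fun _ v => v

/-- a position: (component, row), both 0-based -/
abbrev Pos (r : ℕ) := Fin r × ℕ

/-- `Below p q` : the position `p` is strictly below `q`
(larger component index, or equal component and larger row). -/
def Below (p q : Pos r) : Prop := q.1 < p.1 ∨ (p.1 = q.1 ∧ q.2 < p.2)

/-- row `p.2` of component `p.1` carries a removable node -/
def Removable (l : MultiPartition r) (p : Pos r) : Prop :=
  l.part p.1 (p.2 + 1) < l.part p.1 p.2

/-- row `p.2` of component `p.1` carries an addable node -/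
def Addable (l : MultiPartition r) (p : Pos r) : Prop :=
  p.2 = 0 ∨ l.part p.1 p.2 < l.part p.1 (p.2 - 1)

/-- residue of the node in row `i`, column `j` (0-based) of component `s`:
`j - i + v s` in `ZMod e` (for `e = 0` this is `ℤ`). -/
def resNode (v : Fin r → ZMod e) (s : Fin r) (i j : ℕ) : ZMod e :=
  (j : ZMod e) - (i : ZMod e) + v s

/-- residue of the removable node in row `p` -/
def resRem (v : Fin r → ZMod e) (l : MultiPartition r) (p : Pos r) : ZMod e :=
  resNode v p.1 p.2 (l.part p.1 p.2 - 1)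

/-- residue of the addable node in row `p` -/
def resAdd (v : Fin r → ZMod e) (l : MultiPartition r) (p : Pos r) : ZMod e :=
  resNode v p.1 p.2 (l.part p.1 p.2)

/-- `p` is a normal `x`-node of `l`: it is a removable `x`-node, and for every
addable `x`-node `q` below it, there are strictly more removable `x`-nodes than
addable `x`-nodes strictly between `q` and `p`. -/
def Normal (v : Fin r → ZMod e) (l : MultiPartition r) (p : Pos r) (x : ZMod e) : Prop :=
  Removable l p ∧ resRem v l p = x ∧
  ∀ q : Pos r, Addable l q → resAdd v l q = x → Below q p →
    {q' : Pos r | Removable l q' ∧ resRem v l q' = x ∧ Below q' p ∧ Below q q'}.ncard >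
    {q' : Pos r | Addable l q' ∧ resAdd v l q' = x ∧ Below q' p ∧ Below q q'}.ncard

/-- the good `x`-node: the highest normal `x`-node -/
def Good (v : Fin r → ZMod e) (l : MultiPartition r) (p : Pos r) (x : ZMod e) : Prop :=
  Normal v l p x ∧ ∀ q, Normal v l q x → ¬ Below p q

/-- `m` is obtained from `l` by adding one node at the end of row `p.2` of
component `p.1`. -/
def AddNode (l m : MultiPartition r) (p : Pos r) : Prop :=
  (∀ s, s ≠ p.1 → m.part s = l.part s) ∧
  (∀ i, i ≠ p.2 → m.part p.1 i = l.part p.1 i) ∧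
  m.part p.1 p.2 = l.part p.1 p.2 + 1

/-- the empty multipartition -/
def IsEmptyMP (l : MultiPartition r) : Prop := ∀ s, l.part s = 0

/-- Kleshchev multipartitions with respect to `(e; v)`: defined recursively by
adding good nodes. -/
inductive Kleshchev (v : Fin r → ZMod e) : MultiPartition r → Prop
  | empty (l : MultiPartition r) : IsEmptyMP l → Kleshchev v l
  | step (l m : MultiPartition r) (p : Pos r) (x : ZMod e) :
      Kleshchev v l → AddNode l m p → Good v m p x → Kleshchev v m

/-- a semi-ladder node: a removable node with no lower addable node of the
same residue -/
def SemiLadder (v : Fin r → ZMod e) (l : MultiPartition r) (p : Pos r) : Prop :=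
  Removable l p ∧ ∀ q, Addable l q → resAdd v l q = resRem v l p → ¬ Below q p

/-- a ladder node: a semi-ladder node with no higher semi-ladder node of the
same residue -/
def LadderNode (v : Fin r → ZMod e) (l : MultiPartition r) (p : Pos r) : Prop :=
  SemiLadder v l p ∧
  ∀ q, SemiLadder v l q → resRem v l q = resRem v l p → ¬ Below p q

/-- `m` is obtained from `l` by removing all the nodes of the ladder
`x`-sequence of `l` (i.e. all semi-ladder `x`-nodes of `l`, which is required
to be nonempty). -/
def RemoveLadderSeq (v : Fin r → ZMod e) (l m : MultiPartition r) (x : ZMod e) : Prop :=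
  (∃ p, SemiLadder v l p ∧ resRem v l p = x) ∧
  ∀ s i, (SemiLadder v l (s, i) ∧ resRem v l (s, i) = x →
            m.part s i = l.part s i - 1) ∧
         (¬ (SemiLadder v l (s, i) ∧ resRem v l (s, i) = x) →
            m.part s i = l.part s i)

/-- strong ladder multipartitions: obtained from the empty multipartition by
successively adding whole ladder sequences -/
inductive StrongLadder (v : Fin r → ZMod e) : MultiPartition r → Prop
  | empty (l : MultiPartition r) : IsEmptyMP l → StrongLadder v l
  | step (l m : MultiPartition r) (x : ZMod e) :
      StrongLadder v l → RemoveLadderSeq v m l x → StrongLadder v m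

/-- ladder multipartitions: obtained from the empty multipartition by
successively adding single ladder nodes -/
inductive Ladder (v : Fin r → ZMod e) : MultiPartition r → Prop
  | empty (l : MultiPartition r) : IsEmptyMP l → Ladder v l
  | step (l m : MultiPartition r) (p : Pos r) :
      Ladder v l → AddNode l m p → LadderNode v m p → Ladder v m

/-- the dominance order on multipartitions -/
def Dominates (l m : MultiPartition r) : Prop :=
  ∀ s : Fin r, ∀ i : ℕ,
    ((∑ a ∈ Finset.univ.filter (fun a => a < s), (l.part a).sum fun _ v => v) +
      ∑ j ∈ Finset.range i, l.part s j) ≥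
    ((∑ a ∈ Finset.univ.filter (fun a => a < s), (m.part a).sum fun _ v => v) +
      ∑ j ∈ Finset.range i, m.part s j)

/-- the order `≺` of Definition 3.6 -/
def Prec (l m : MultiPartition r) : Prop :=
  ∃ s : Fin r, ∃ t : ℕ,
    (∀ j, s < j → l.part j = m.part j) ∧
    (∀ j, t < j → l.part s j = m.part s j) ∧
    l.part s t < m.part s t

/-- hook length at the node in row `i`, column `j` (0-based) of a partition `f` -/
noncomputable def hookLen (f : ℕ →₀ ℕ) (i j : ℕ) : ℕ :=
  (f i - j) + {k : ℕ | i < k ∧ j < f k}.ncard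

/-- an `e`-core: a partition having no hook of length `e`
(for `e = 0` every partition is a `0`-core) -/
def ECore (e : ℕ) (f : ℕ →₀ ℕ) : Prop :=
  ∀ i j, j < f i → hookLen f i j ≠ e

/-- `e`-restricted partitions (every partition is `0`-restricted) -/
def ERestricted (e : ℕ) (f : ℕ →₀ ℕ) : Prop :=
  ∀ i, e ≠ 0 → f i - f (i + 1) < e

end MultiPartition


/-!
Encode a partition `f` by its beta numbers `β k = f k - k`. A hook of length `h` in row `i`
corresponds exactly to a gap `β i - h` below `β i`, so `f` is an `e`-core iff its beta set is
closed under subtracting `e`. Removing the removable `x`-nodes slides each beta number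
`b ≡ x - v + 1` with a gap at `b - 1` to `b - 1`, and a case analysis on the two runners of the
`e`-abacus involved, `c = x - v + 1` and `c - 1`, shows that the slide preserves this closure.
-/

theorem Antitone.exists_lt_iff_lt {α : Type*} [LinearOrder α] {g : ℕ → α} (hg : Antitone g)
    {y : α} (h : ∃ k, g k ≤ y) : ∃ n, ∀ k, y < g k ↔ k < n := by
  classical
  refine ⟨Nat.find h, fun k => ⟨fun hk => ?_, fun hk => lt_of_not_ge (Nat.find_min h hk)⟩⟩
  by_contra hn
  exact absurd hk (not_lt.2 ((hg (not_lt.1 hn)).trans (Nat.find_spec h)))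

theorem Finsupp.exists_apply_eq_zero {α M : Type*} [Infinite α] [Zero M] (f : α →₀ M) :
    ∃ a, f a = 0 := by
  obtain ⟨a, ha⟩ := Infinite.exists_notMem_finset f.support
  exact ⟨a, Finsupp.notMem_support_iff.1 ha⟩

namespace MultiPartition

def beta (f : ℕ →₀ ℕ) (k : ℕ) : ℤ := f k - k

variable {f : ℕ →₀ ℕ}

theorem beta_strictAnti (hf : Antitone f) : StrictAnti (beta f) :=
  strictAnti_nat_of_succ_lt fun k => by
    have := hf (Nat.le_add_right k 1)
    simp only [beta]
    omega

theorem hookLen_eq_of_lt_iff {i j n : ℕ} (hn : ∀ k, j < f k ↔ k < n) :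
    hookLen f i j = (f i - j) + (n - i - 1) := by
  have hleg : {k : ℕ | i < k ∧ j < f k} = ↑(Finset.Ioo i n) := by
    ext k
    simp [hn k]
  rw [hookLen, hleg, Set.ncard_coe_finset, Nat.card_Ioo]

theorem beta_ne_sub_hookLen (hf : Antitone f) {i j : ℕ} (hj : j < f i) (k : ℕ) :
    beta f k ≠ beta f i - hookLen f i j := by
  obtain ⟨k₀, hk₀⟩ := f.exists_apply_eq_zero
  obtain ⟨n, hn⟩ := hf.exists_lt_iff_lt (y := j) ⟨k₀, by omega⟩
  have hin := (hn i).1 hj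
  rw [hookLen_eq_of_lt_iff hn, beta, beta]
  have := hn k
  push_cast
  omega

theorem exists_hookLen_eq_of_notMem (hf : Antitone f) {i : ℕ} {y : ℤ}
    (hy : y ∉ Set.range (beta f)) (hlt : y < beta f i) :
    ∃ j < f i, (hookLen f i j : ℤ) = beta f i - y := by
  have hβ_le : ∃ k, beta f k ≤ y := by
    obtain ⟨k₀, hk₀⟩ := f.exists_apply_eq_zero
    refine ⟨k₀ + y.natAbs, ?_⟩
    have := hf (k₀.le_add_right y.natAbs)
    simp only [beta]
    omega
  obtain ⟨n, hn⟩ := (beta_strictAnti hf).antitone.exists_lt_iff_lt hβ_le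
  have hin : i < n := (hn i).1 hlt
  have hβn : beta f n < y :=
    lt_of_le_of_ne (not_lt.1 fun h => ((hn n).1 h).false) fun h => hy ⟨n, h⟩
  have hβn₁ : y < beta f (n - 1) := (hn _).2 (by omega)
  simp only [beta] at hβn hβn₁ ⊢
  -- the hook sits in column `y + n - 1`, which is `≥ 0` because `f n ≥ 0`
  obtain ⟨j, hj⟩ : ∃ j : ℕ, (j : ℤ) = y + n - 1 := ⟨(y + n - 1).toNat, by omega⟩
  have hcut : ∀ k, j < f k ↔ k < n := fun k => by
    constructor
    · intro hk
      by_contra hkn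
      have := hf (not_lt.1 hkn)
      omega
    · intro hk
      have := hf (Nat.le_sub_one_of_lt hk)
      omega
  have hji := (hcut i).2 hin
  refine ⟨j, hji, ?_⟩
  rw [hookLen_eq_of_lt_iff hcut]
  push_cast
  omega

theorem eCore_iff_sub_mem_range_beta {e : ℕ} (hf : Antitone f) :
    ECore e f ↔ ∀ b ∈ Set.range (beta f), b - e ∈ Set.range (beta f) := by
  constructor
  · rintro hcore _ ⟨i, rfl⟩
    by_contra hgap
    have he : 0 < e := Nat.pos_of_ne_zero fun he => hgap ⟨i, by simp [he]⟩
    obtain ⟨j, hj, hhook⟩ := exists_hookLen_eq_of_notMem hf hgap (i := i) (by omega)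
    exact hcore i j hj (by omega)
  · rintro hclosed i j hj rfl
    obtain ⟨k, hk⟩ := hclosed _ ⟨i, rfl⟩
    exact beta_ne_sub_hookLen hf hj k hk

theorem lt_iff_beta_sub_one_notMem (hf : Antitone f) (k : ℕ) :
    f (k + 1) < f k ↔ beta f k - 1 ∉ Set.range (beta f) := by
  constructor
  · rintro hlt ⟨k', hk'⟩
    rcases le_or_gt k' k with hle | hgt
    · have := (beta_strictAnti hf).antitone hle
      omega
    · have := (beta_strictAnti hf).antitone (show k + 1 ≤ k' from hgt)
      simp only [beta] at hk' this
      omega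
  · intro hgap
    by_contra hge
    have := hf (Nat.le_add_right k 1)
    exact hgap ⟨k + 1, by simp only [beta]; push_cast; omega⟩

theorem removable_and_resRem_eq_iff {r e : ℕ} (v : Fin r → ZMod e) (l : MultiPartition r)
    (p : Pos r) (x : ZMod e) :
    Removable l p ∧ resRem v l p = x ↔
      beta (l.part p.1) p.2 - 1 ∉ Set.range (beta (l.part p.1)) ∧
        (beta (l.part p.1) p.2 : ZMod e) = x - v p.1 + 1 := by
  have hf : Antitone (l.part p.1) := antitone_nat_of_succ_le (l.mono p.1)
  rw [Removable, lt_iff_beta_sub_one_notMem hf]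
  refine and_congr_right fun hgap => ?_
  have hpos : 1 ≤ l.part p.1 p.2 := by
    by_contra h0
    have := hf (Nat.le_add_right p.2 1)
    exact hgap ⟨p.2 + 1, by simp only [beta]; push_cast; omega⟩
  rw [resRem, resNode, beta, Nat.cast_sub hpos]
  push_cast
  constructor <;> intro h <;> linear_combination h

end MultiPartition

section Slide

variable {e : ℕ} (B : Set ℤ) (c : ZMod e)

open Classical in
noncomputable def slide (b : ℤ) : ℤ :=
  if b - 1 ∉ B ∧ (b : ZMod e) = c then b - 1 else b

variable {B c}

theorem slide_of_moves {b : ℤ} (hgap : b - 1 ∉ B) (hc : (b : ZMod e) = c) :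
    slide B c b = b - 1 :=
  if_pos ⟨hgap, hc⟩

theorem slide_of_not_moves {b : ℤ} (h : ¬(b - 1 ∉ B ∧ (b : ZMod e) = c)) : slide B c b = b :=
  if_neg h

theorem slide_sub_mem_image (hB : ∀ b ∈ B, b - e ∈ B) {b : ℤ} (hb : b ∈ B) :
    slide B c b - e ∈ slide B c '' B := by
  have hbe := hB b hb
  by_cases hmove : b - 1 ∉ B ∧ (b : ZMod e) = c
  · obtain ⟨hgap, hc⟩ := hmove
    rw [slide_of_moves hgap hc]
    by_cases hbe1 : b - 1 - e ∈ B
    · -- `b - 1 - e ≡ c - 1`, and `c - 1 = c` would force `e = 1`, making `b - 1 = b - e` a bead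
      refine ⟨b - 1 - e, hbe1, slide_of_not_moves fun ⟨_, hc'⟩ => hgap ?_⟩
      push_cast at hc'
      simp only [ZMod.natCast_self, sub_zero] at hc'
      have he : e = 1 := ZMod.one_eq_zero_iff.1 (by linear_combination hc - hc')
      simpa [he] using hbe
    · refine ⟨b - e, hbe, (slide_of_moves ?_ ?_).trans (sub_right_comm _ _ _)⟩
      · rwa [sub_right_comm]
      · simpa using hc
  · rw [slide_of_not_moves hmove]
    refine ⟨b - e, hbe, slide_of_not_moves ?_⟩
    rintro ⟨hgap, hc⟩
    simp only [Int.cast_sub, Int.cast_natCast, ZMod.natCast_self, sub_zero] at hc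
    have hb1 : b - 1 ∈ B := by_contra fun h => hmove ⟨h, hc⟩
    exact hgap (by rw [sub_right_comm]; exact hB _ hb1)

end Slide

open MultiPartition

theorem ecore_remove_all_x_nodes_general {e : ℕ}
    (v : Fin 1 → ZMod e) (l m : MultiPartition 1)
    (hcore : ECore e (l.part 0)) (x : ZMod e)
    (hrem : ∀ i : ℕ,
      (Removable l (0, i) ∧ resRem v l (0, i) = x →
        m.part 0 i = l.part 0 i - 1) ∧
      (¬ (Removable l (0, i) ∧ resRem v l (0, i) = x) →
        m.part 0 i = l.part 0 i)) :
    ECore e (m.part 0) := by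
  have hl : Antitone (l.part 0) := antitone_nat_of_succ_le (l.mono 0)
  have hm : Antitone (m.part 0) := antitone_nat_of_succ_le (m.mono 0)
  have hrow : ∀ k, beta (m.part 0) k =
      slide (Set.range (beta (l.part 0))) (x - v 0 + 1) (beta (l.part 0) k) := by
    intro k
    have hP := removable_and_resRem_eq_iff v l (0, k) x
    dsimp only at hP
    by_cases hk : Removable l (0, k) ∧ resRem v l (0, k) = x
    · have hpos : l.part 0 (k + 1) < l.part 0 k := hk.1
      rw [slide_of_moves (hP.1 hk).1 (hP.1 hk).2, beta, beta, (hrem k).1 hk]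
      omega
    · rw [slide_of_not_moves (hP.not.1 hk), beta, beta, (hrem k).2 hk]
  rw [eCore_iff_sub_mem_range_beta hl] at hcore
  rw [eCore_iff_sub_mem_range_beta hm]
  rintro _ ⟨i, rfl⟩
  obtain ⟨_, ⟨k, rfl⟩, hk⟩ := slide_sub_mem_image hcore ⟨i, rfl⟩
  exact ⟨k, by rw [hrow, hrow, hk]⟩

/-- removing all removable `x`-nodes from an `e`-core yields an
`e`-core. -/
theorem ecore_remove_all_x_nodes {e : ℕ} (he : 2 ≤ e)
    (v : Fin 1 → ZMod e) (l m : MultiPartition 1)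
    (hcore : ECore e (l.part 0)) (x : ZMod e)
    (hrem : ∀ i : ℕ,
      (Removable l (0, i) ∧ resRem v l (0, i) = x →
        m.part 0 i = l.part 0 i - 1) ∧
      (¬ (Removable l (0, i) ∧ resRem v l (0, i) = x) →
        m.part 0 i = l.part 0 i)) :
    ECore e (m.part 0) :=
  ecore_remove_all_x_nodes_general v l m hcore x hrem
end

section
/- Every strong ladder r-partition is a ladder r-partition. -/
open Finset

/-!
Induct on the strong ladder construction: let the ladder multipartition `l` arise from `m` by
removing the ladder `x`-sequence `S` of `m`. Put the nodes of `S` back one at a time, lowest first. The node `a` put back is a semi-ladder node, since nothing at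
or below `a` differs from `m`. It is even a ladder node: let `q` be a higher semi-ladder `x`-node.
A missing node of `S` below `q` leaves an addable `x`-node below `q`, which is impossible; if `q`
itself is missing, its removable node has residue `x - 1`, which differs from `x` as `e ≠ 1`;
and if all missing nodes lie above `q`, then `q` is a semi-ladder `x`-node of `m` above `a`, so
it belongs to `S` and is still missing.
-/

namespace MultiPartition

variable {r e : ℕ}

theorem ext {l m : MultiPartition r} (h : ∀ s i, l.part s i = m.part s i) : l = m := by
  cases l
  cases m
  congr
  funext s
  exact Finsupp.ext (h s)

theorem below_iff_toLex_lt {p q : Pos r} : Below p q ↔ toLex q < toLex p :=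
  Prod.Lex.toLex_gt_toLex.symm

theorem below_irrefl (p : Pos r) : ¬ Below p p := fun h => (below_iff_toLex_lt.mp h).false

theorem Below.trans {p q u : Pos r} (hpq : Below p q) (hqu : Below q u) : Below p u :=
  below_iff_toLex_lt.mpr ((below_iff_toLex_lt.mp hqu).trans (below_iff_toLex_lt.mp hpq))

theorem toLex_le_row_pred_of_below {p q : Pos r} (h : Below q p) :
    toLex p ≤ toLex (q.1, q.2 - 1) := by
  rcases h with h | ⟨h1, h2⟩
  · exact Prod.Lex.toLex_le_toLex.mpr (Or.inl h)
  · exact Prod.Lex.toLex_le_toLex.mpr (Or.inr ⟨h1.symm, by omega⟩)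

theorem finite_setOf_removable (l : MultiPartition r) : {p | Removable l p}.Finite := by
  refine (Set.finite_univ.prod (Set.finite_iUnion fun s => (l.part s).support.finite_toSet)).subset
    fun p (hp : l.part p.1 (p.2 + 1) < l.part p.1 p.2) => ?_
  exact ⟨trivial, Set.mem_iUnion.mpr ⟨p.1, Finsupp.mem_support_iff.mpr (by omega)⟩⟩

theorem resNode_sub_one (v : Fin r → ZMod e) (s : Fin r) (i : ℕ) {j : ℕ} (hj : 1 ≤ j) :
    resNode v s i (j - 1) = resNode v s i j - 1 := by
  simp only [resNode, Nat.cast_sub hj, Nat.cast_one]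
  ring

theorem semiLadder_congr {v : Fin r → ZMod e} {l l' : MultiPartition r} {p : Pos r}
    (h : ∀ q : Pos r, toLex p ≤ toLex q → l.part q.1 q.2 = l'.part q.1 q.2) :
    SemiLadder v l p ↔ SemiLadder v l' p := by
  suffices key : ∀ l l' : MultiPartition r,
      (∀ q : Pos r, toLex p ≤ toLex q → l.part q.1 q.2 = l'.part q.1 q.2) →
      SemiLadder v l p → SemiLadder v l' p from
    ⟨key l l' h, key l' l fun q hq => (h q hq).symm⟩
  rintro l l' h ⟨hrem, hlow⟩
  have hp : l.part p.1 p.2 = l'.part p.1 p.2 := h p le_rfl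
  have hp_succ : l.part p.1 (p.2 + 1) = l'.part p.1 (p.2 + 1) :=
    h (p.1, p.2 + 1) (Prod.Lex.toLex_le_toLex.mpr (Or.inr ⟨rfl, by omega⟩))
  refine ⟨by unfold Removable at hrem ⊢; omega, fun q hq hres hbelow => hlow q ?_ ?_ hbelow⟩
  · refine hq.imp id fun hlt => ?_
    rwa [h q (below_iff_toLex_lt.mp hbelow).le, h _ (toLex_le_row_pred_of_below hbelow)]
  · simpa only [resAdd, resRem, hp, h q (below_iff_toLex_lt.mp hbelow).le] using hres

noncomputable def removeNodes (m : MultiPartition r) (R : Finset (Pos r))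
    (hR : ∀ p ∈ R, Removable m p) : MultiPartition r where
  part s := Finsupp.onFinset (m.part s).support
    (fun i => m.part s i - if (s, i) ∈ R then 1 else 0)
    (fun i hi => Finsupp.mem_support_iff.mpr fun h0 => hi (by simp [h0]))
  mono s i := by
    have hmono := m.mono s i
    simp only [Finsupp.onFinset_apply]
    by_cases h : (s, i) ∈ R
    · have hrem : m.part s (i + 1) < m.part s i := hR (s, i) h
      split_ifs <;> omega
    · split_ifs <;> omega

section removeNodes

variable {v : Fin r → ZMod e} {m : MultiPartition r} {R : Finset (Pos r)}
  {hR : ∀ p ∈ R, Removable m p}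

theorem removeNodes_part (s : Fin r) (i : ℕ) :
    (m.removeNodes R hR).part s i = m.part s i - if (s, i) ∈ R then 1 else 0 :=
  rfl

theorem removeNodes_part_of_mem {p : Pos r} (hp : p ∈ R) :
    (m.removeNodes R hR).part p.1 p.2 = m.part p.1 p.2 - 1 := by
  rw [removeNodes_part, if_pos hp]

theorem removeNodes_part_of_notMem {p : Pos r} (hp : p ∉ R) :
    (m.removeNodes R hR).part p.1 p.2 = m.part p.1 p.2 := by
  rw [removeNodes_part, if_neg hp, Nat.sub_zero]

theorem removeNodes_empty : m.removeNodes ∅ (fun _ h => absurd h (Finset.notMem_empty _)) = m :=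
  ext fun s i => removeNodes_part_of_notMem (p := (s, i)) (Finset.notMem_empty _)

theorem removeNodes_part_of_forall_below {p q : Pos r} (hp : ∀ u ∈ R, Below p u)
    (hq : toLex p ≤ toLex q) : (m.removeNodes R hR).part q.1 q.2 = m.part q.1 q.2 :=
  removeNodes_part_of_notMem fun hqR =>
    (below_iff_toLex_lt.mp (hp q hqR)).not_ge hq

theorem semiLadder_removeNodes_iff {p : Pos r} (hp : ∀ u ∈ R, Below p u) :
    SemiLadder v (m.removeNodes R hR) p ↔ SemiLadder v m p :=
  semiLadder_congr fun _ hq => removeNodes_part_of_forall_below hp hq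

theorem resRem_removeNodes_of_forall_below {p : Pos r} (hp : ∀ u ∈ R, Below p u) :
    resRem v (m.removeNodes R hR) p = resRem v m p := by
  rw [resRem, resRem, removeNodes_part_of_forall_below hp le_rfl]

theorem addable_removeNodes_of_mem {u : Pos r} (hu : u ∈ R) :
    Addable (m.removeNodes R hR) u := by
  rcases Nat.eq_zero_or_pos u.2 with h0 | hpos
  · exact Or.inl h0
  right
  have hrem : m.part u.1 (u.2 + 1) < m.part u.1 u.2 := hR u hu
  have hmono : m.part u.1 u.2 ≤ m.part u.1 (u.2 - 1) := by
    simpa [Nat.sub_add_cancel hpos] using m.mono u.1 (u.2 - 1)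
  rw [removeNodes_part_of_mem hu, removeNodes_part]
  split_ifs with hprev
  · have hrem_prev : m.part u.1 (u.2 - 1 + 1) < m.part u.1 (u.2 - 1) := hR _ hprev
    rw [Nat.sub_add_cancel hpos] at hrem_prev
    omega
  · omega

theorem resAdd_removeNodes_of_mem {u : Pos r} (hu : u ∈ R) :
    resAdd v (m.removeNodes R hR) u = resRem v m u := by
  rw [resAdd, resRem, removeNodes_part_of_mem hu]

theorem resRem_removeNodes_of_mem {u : Pos r} (hu : u ∈ R)
    (hrem : Removable (m.removeNodes R hR) u) :
    resRem v (m.removeNodes R hR) u = resRem v m u - 1 := by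
  have : 1 ≤ m.part u.1 u.2 - 1 := by
    unfold Removable at hrem
    rw [removeNodes_part_of_mem hu] at hrem
    omega
  rw [resRem, resRem, removeNodes_part_of_mem hu, resNode_sub_one v _ _ this]

theorem addNode_removeNodes_insert {a : Pos r} (ha : a ∉ R)
    (hR' : ∀ p ∈ insert a R, Removable m p) :
    AddNode (m.removeNodes (insert a R) hR') (m.removeNodes R hR) a := by
  have hpos : 1 ≤ m.part a.1 a.2 := by
    have := hR' a (Finset.mem_insert_self a R)
    unfold Removable at this
    omega
  refine ⟨fun s hs => Finsupp.ext fun i => ?_, fun i hi => ?_, ?_⟩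
  · have : (s, i) ∈ insert a R ↔ (s, i) ∈ R := by
      simp [Finset.mem_insert, Prod.ext_iff, hs]
    simp only [removeNodes_part, this]
  · have : (a.1, i) ∈ insert a R ↔ (a.1, i) ∈ R := by
      simp [Finset.mem_insert, Prod.ext_iff, hi]
    simp only [removeNodes_part, this]
  · rw [removeNodes_part_of_mem (Finset.mem_insert_self a R), removeNodes_part_of_notMem ha]
    omega

theorem ladderNode_removeNodes (hone : (1 : ZMod e) ≠ 0) {x : ZMod e} {a : Pos r}
    (hRx : ∀ u ∈ R, resRem v m u = x) (ha : SemiLadder v m a) (hax : resRem v m a = x)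
    (hbelow : ∀ u ∈ R, Below a u)
    (hup : ∀ q, SemiLadder v m q → resRem v m q = x → Below a q → q ∈ R) :
    LadderNode v (m.removeNodes R hR) a := by
  refine ⟨(semiLadder_removeNodes_iff hbelow).mpr ha, fun q hq hres habove => ?_⟩
  rw [resRem_removeNodes_of_forall_below hbelow, hax] at hres
  by_cases hqR : ∀ u ∈ R, Below q u
  · have hqm : SemiLadder v m q := (semiLadder_removeNodes_iff hqR).mp hq
    rw [resRem_removeNodes_of_forall_below hqR] at hres
    exact below_irrefl q (hqR q (hup q hqm hres habove))
  obtain ⟨u, hu, hqu⟩ := not_forall₂.mp hqR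
  rcases (not_lt.mp (below_iff_toLex_lt.not.mp hqu)).lt_or_eq with hlt | heq
  · exact hq.2 u (addable_removeNodes_of_mem hu)
      (by rw [resAdd_removeNodes_of_mem hu, hRx u hu, hres]) (below_iff_toLex_lt.mpr hlt)
  · obtain rfl : q = u := toLex.injective heq
    rw [resRem_removeNodes_of_mem hu hq.1, hRx q hu] at hres
    exact hone (by linear_combination -hres)

end removeNodes

theorem ladder_of_ladder_removeNodes (hone : (1 : ZMod e) ≠ 0) {v : Fin r → ZMod e}
    {m : MultiPartition r} {x : ZMod e} (R : Finset (Pos r))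
    (hRS : ∀ u ∈ R, SemiLadder v m u ∧ resRem v m u = x)
    (hup : ∀ u ∈ R, ∀ q, SemiLadder v m q → resRem v m q = x → Below u q → q ∈ R)
    (hl : Ladder v (m.removeNodes R fun u hu => (hRS u hu).1.1)) : Ladder v m := by
  induction R using Finset.induction_on_max_value (f := (toLex : Pos r → Fin r ×ₗ ℕ)) with
  | empty => rwa [removeNodes_empty] at hl
  | insert a R haR hmax ih =>
    have hbelow : ∀ u ∈ R, Below a u := fun u hu =>
      below_iff_toLex_lt.mpr (lt_of_le_of_ne (hmax u hu) fun h => haR (toLex.injective h ▸ hu))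
    have hup_a : ∀ q, SemiLadder v m q → resRem v m q = x → Below a q → q ∈ R := by
      intro q hq hqx haq
      have hq_ins := hup a (Finset.mem_insert_self a R) q hq hqx haq
      refine (Finset.mem_insert.mp hq_ins).resolve_left ?_
      rintro rfl
      exact below_irrefl q haq
    have hRS_a := hRS a (Finset.mem_insert_self a R)
    refine ih (fun u hu => hRS u (Finset.mem_insert_of_mem hu))
      (fun u hu q hq hqx huq => hup_a q hq hqx ((hbelow u hu).trans huq)) ?_
    exact Ladder.step _ _ a hl (addNode_removeNodes_insert haR _)
      (ladderNode_removeNodes hone (fun u hu => (hRS u (Finset.mem_insert_of_mem hu)).2)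
        hRS_a.1 hRS_a.2 hbelow hup_a)

noncomputable def ladderSeq (v : Fin r → ZMod e) (m : MultiPartition r) (x : ZMod e) :
    Finset (Pos r) :=
  Set.Finite.toFinset (s := {p | SemiLadder v m p ∧ resRem v m p = x})
    (m.finite_setOf_removable.subset fun _ hp => hp.1.1)

theorem mem_ladderSeq {v : Fin r → ZMod e} {m : MultiPartition r} {x : ZMod e} {p : Pos r} :
    p ∈ ladderSeq v m x ↔ SemiLadder v m p ∧ resRem v m p = x :=
  Set.Finite.mem_toFinset _

theorem RemoveLadderSeq.eq_removeNodes {v : Fin r → ZMod e} {m l : MultiPartition r}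
    {x : ZMod e} (h : RemoveLadderSeq v m l x) :
    l = m.removeNodes (ladderSeq v m x) fun _ hp => (mem_ladderSeq.mp hp).1.1 := by
  refine ext fun s i => ?_
  by_cases hp : (s, i) ∈ ladderSeq v m x
  · rw [removeNodes_part_of_mem hp]
    exact (h.2 s i).1 (mem_ladderSeq.mp hp)
  · rw [removeNodes_part_of_notMem hp]
    exact (h.2 s i).2 (mt mem_ladderSeq.mpr hp)

end MultiPartition

open MultiPartition

/-- every strong ladder multipartition is a ladder multipartition. -/
theorem strongladder_is_ladder {r e : ℕ} (he : e = 0 ∨ 2 ≤ e)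
    (v : Fin r → ZMod e) (l : MultiPartition r)
    (h : StrongLadder v l) : Ladder v l := by
  have hone : (1 : ZMod e) ≠ 0 := by
    have : Nontrivial (ZMod e) := ZMod.nontrivial_iff.mpr (by omega)
    exact one_ne_zero
  induction h with
  | empty l hl => exact Ladder.empty l hl
  | step l m x _ hrm ih =>
    exact ladder_of_ladder_removeNodes hone (ladderSeq v m x) (fun _ => mem_ladderSeq.mp)
      (fun _ _ _ hq hqx _ => mem_ladderSeq.mpr ⟨hq, hqx⟩) (hrm.eq_removeNodes ▸ ih)
end
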